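/- If every induced path between non-adjacent vertices u and v of G passes through a vertex of I_{u,v} = N(u) ∩ N(v), and all such paths have length 2, then in the complement graph, adding uv to G corresponds to deleting the edge uv from the complement, and the complement of G + uv has no induced cycle of length 5 or more passing through the non-edge uv if the complement of G is C5-, C6-, …-free. -/

import Mathlib

/-!
Let `C` be an induced cycle of length `n ≥ 5` in `(G + uv)ᶜ`, which is `Gᶜ` with the edge `uv`
removed. If `C` misses `u` or `v`, it is also an induced cycle of `Gᶜ`. Otherwise `u` and `v`
are non-consecutive vertices of `C`, and on the vertices of `C` the graph `G` is the complement
of `C + uv`. For `n ≥ 6` that graph contains an induced `u`–`v` path of length 3, and for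
`n = 5` it is itself a path of length 4; either way `{u, v}` is not a two-pair.
-/

open SimpleGraph

/-- `G` has an induced (chordless) cycle of length `n`. -/
def HasInducedCycle {V : Type*} (G : SimpleGraph V) (n : ℕ) : Prop :=
  Nonempty (SimpleGraph.cycleGraph n ↪g G)

/-- `G` is chordal: it has no induced cycle of length 4 or more. -/
def Chordal {V : Type*} (G : SimpleGraph V) : Prop :=
  ∀ n, 4 ≤ n → ¬ HasInducedCycle G n

/-- `G` is weakly chordal: neither `G` nor its complement has an induced cycle
of length 5 or more. -/
def WeaklyChordal {V : Type*} (G : SimpleGraph V) : Prop :=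
  (∀ n, 5 ≤ n → ¬ HasInducedCycle G n) ∧ (∀ n, 5 ≤ n → ¬ HasInducedCycle Gᶜ n)

/-- `G` has an induced (chordless) path of length `ℓ` (i.e. with `ℓ` edges)
from `u` to `v`. -/
def HasInducedPath {V : Type*} (G : SimpleGraph V) (u v : V) (ℓ : ℕ) : Prop :=
  ∃ f : SimpleGraph.pathGraph (ℓ + 1) ↪g G, f 0 = u ∧ f (Fin.last ℓ) = v

theorem Fin.val_sub_eq_one_iff {n : ℕ} (hn : 1 < n) {a b : Fin n} :
    (a - b).val = 1 ↔ b.val + 1 = a.val ∨ (b.val + 1 = n ∧ a.val = 0) := by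
  have ha := a.is_lt
  rcases le_or_gt b a with h | h
  · rw [Fin.coe_sub_iff_le.2 h]
    rw [Fin.le_def] at h
    omega
  · rw [Fin.coe_sub_iff_lt.2 h]
    rw [Fin.lt_def] at h
    omega

namespace SimpleGraph

variable {V W : Type*}

def Embedding.supEdge {G : SimpleGraph V} {H : SimpleGraph W} (f : G ↪g H) (a b : V) :
    G ⊔ edge a b ↪g H ⊔ edge (f a) (f b) where
  toEmbedding := f.toEmbedding
  map_rel_iff' := by simp [edge_adj, f.injective.eq_iff]

def Embedding.toSupEdge {G : SimpleGraph V} {H : SimpleGraph W} (f : G ↪g H) {a : W}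
    (ha : a ∉ Set.range f) (b : W) : G ↪g H ⊔ edge a b where
  toEmbedding := f.toEmbedding
  map_rel_iff' {x y} := by
    have hx : f x ≠ a := fun h => ha ⟨x, h⟩
    have hy : f y ≠ a := fun h => ha ⟨y, h⟩
    simp [edge_adj, hx, hy]

def Embedding.complSupEdge {A : SimpleGraph W} {G : SimpleGraph V} {u v : V}
    (c : A ↪g (G ⊔ edge u v)ᶜ) (huv : ¬G.Adj u v) {a b : W} (ha : c a = u) (hb : c b = v) :
    (A ⊔ edge a b)ᶜ ↪g G where
  toEmbedding := c.toEmbedding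
  map_rel_iff' {x y} := by
    have hu (z : W) : c z = u ↔ z = a := ⟨fun h => c.injective (h.trans ha.symm), (· ▸ ha)⟩
    have hv (z : W) : c z = v ↔ z = b := ⟨fun h => c.injective (h.trans hb.symm), (· ▸ hb)⟩
    have hA := c.map_adj_iff (v := x) (w := y)
    change G.Adj (c x) (c y) ↔ _
    simp only [compl_adj, sup_adj, edge_adj, hu, hv, c.injective.ne_iff] at hA ⊢
    rw [← hA]
    constructor
    · intro h
      refine ⟨fun hxy => h.ne (congrArg c hxy), ?_⟩
      rintro (⟨_, hn⟩ | ⟨⟨rfl, rfl⟩ | ⟨rfl, rfl⟩, _⟩)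
      · exact hn (.inl h)
      · rw [ha, hb] at h
        exact huv h
      · rw [ha, hb] at h
        exact huv h.symm
    · rintro ⟨hxy, hn⟩
      by_contra hP
      refine hn (.inl ⟨hxy, ?_⟩)
      rintro (hP' | hE)
      · exact hP hP'
      · exact hn (.inr hE)

theorem compl_sup_edge_sup_edge {G : SimpleGraph V} {u v : V} (hne : u ≠ v)
    (huv : ¬G.Adj u v) : (G ⊔ edge u v)ᶜ ⊔ edge u v = Gᶜ := by
  rw [compl_sup, ← sdiff_eq, sdiff_sup_self, sup_eq_left, edge_le_iff, compl_adj]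
  exact .inr ⟨hne, huv⟩

theorem cycleGraph_adj_iff_val {n : ℕ} (hn : 1 < n) {a b : Fin n} :
    (cycleGraph n).Adj a b ↔ a.val + 1 = b.val ∨ b.val + 1 = a.val ∨
      (a.val = 0 ∧ b.val + 1 = n) ∨ (b.val = 0 ∧ a.val + 1 = n) := by
  rw [cycleGraph_adj', Fin.val_sub_eq_one_iff hn, Fin.val_sub_eq_one_iff hn]
  omega

theorem compl_cycleGraph_sup_edge_adj_iff {n : ℕ} (hn : 1 < n) {i j a b : Fin n} :
    (cycleGraph n ⊔ edge i j)ᶜ.Adj a b ↔ a.val ≠ b.val ∧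
      ¬(a.val + 1 = b.val ∨ b.val + 1 = a.val ∨ (a.val = 0 ∧ b.val + 1 = n) ∨
        (b.val = 0 ∧ a.val + 1 = n)) ∧
      ¬(a.val = i.val ∧ b.val = j.val ∨ a.val = j.val ∧ b.val = i.val) := by
  simp only [compl_adj, sup_adj, edge_adj, cycleGraph_adj_iff_val hn, ne_eq, Fin.ext_iff]
  tauto

def cycleGraphAddRight {n : ℕ} [NeZero n] (i : Fin n) : cycleGraph n ≃g cycleGraph n where
  toEquiv := Equiv.addRight i
  map_rel_iff' := by simp [cycleGraph_adj']

end SimpleGraph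

open SimpleGraph

theorem HasInducedPath.map {V W : Type*} {G : SimpleGraph V} {H : SimpleGraph W} (f : G ↪g H)
    {a b : V} {ℓ : ℕ} (h : HasInducedPath G a b ℓ) : HasInducedPath H (f a) (f b) ℓ := by
  obtain ⟨p, hp0, hpℓ⟩ := h
  exact ⟨p.trans f, by simp [hp0], by simp [hpℓ]⟩

theorem hasInducedPath_three {V : Type*} {G : SimpleGraph V} {a b c d : V}
    (hab : G.Adj a b) (hbc : G.Adj b c) (hcd : G.Adj c d)
    (hac : a ≠ c) (hbd : b ≠ d) (had : a ≠ d)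
    (hac' : ¬G.Adj a c) (hbd' : ¬G.Adj b d) (had' : ¬G.Adj a d) :
    HasInducedPath G a d 3 := by
  have hf : Function.Injective ![a, b, c, d] := by
    intro i j hij
    fin_cases i <;> fin_cases j <;>
      simp_all [hab.ne, hbc.ne, hcd.ne, hab.ne.symm, hbc.ne.symm, hcd.ne.symm, eq_comm]
  refine ⟨⟨⟨![a, b, c, d], hf⟩, @fun i j => ?_⟩, rfl, rfl⟩
  change G.Adj (![a, b, c, d] i) (![a, b, c, d] j) ↔ _
  fin_cases i <;> fin_cases j <;> simp [pathGraph_adj, G.adj_comm, *]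

theorem hasInducedPath_compl_cycleGraph_five_sup_edge_two :
    HasInducedPath (cycleGraph 5 ⊔ edge 0 2)ᶜ 0 2 4 :=
  ⟨⟨⟨![0, 3, 1, 4, 2], by decide⟩, @fun a b => by
    revert a b
    simp only [compl_adj, sup_adj, edge_adj, pathGraph_adj, Function.Embedding.coeFn_mk]
    decide⟩, rfl, rfl⟩

theorem hasInducedPath_compl_cycleGraph_five_sup_edge_three :
    HasInducedPath (cycleGraph 5 ⊔ edge 0 3)ᶜ 0 3 4 :=
  ⟨⟨⟨![0, 2, 4, 1, 3], by decide⟩, @fun a b => by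
    revert a b
    simp only [compl_adj, sup_adj, edge_adj, pathGraph_adj, Function.Embedding.coeFn_mk]
    decide⟩, rfl, rfl⟩

theorem exists_hasInducedPath_compl_cycleGraph_sup_edge_zero {n : ℕ} [NeZero n] (hn : 5 ≤ n)
    {k : Fin n} (hk0 : k ≠ 0) (hk : ¬(cycleGraph n).Adj 0 k) :
    ∃ ℓ ≠ 2, HasInducedPath (cycleGraph n ⊔ edge 0 k)ᶜ 0 k ℓ := by
  have h0 : (0 : Fin n).val = 0 := Fin.val_zero n
  rw [cycleGraph_adj_iff_val (by omega)] at hk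
  rw [ne_eq, Fin.ext_iff] at hk0
  rcases (by omega : n = 5 ∨ 6 ≤ n) with rfl | hn6
  · obtain rfl | rfl : k = 2 ∨ k = 3 := by omega
    · exact ⟨4, by norm_num, hasInducedPath_compl_cycleGraph_five_sup_edge_two⟩
    · exact ⟨4, by norm_num, hasInducedPath_compl_cycleGraph_five_sup_edge_three⟩
  refine ⟨3, by norm_num, ?_⟩
  -- `0 – b – c – k` is induced when `b` is a cycle neighbour of `k`, `c` one of `0`,
  -- and `b`, `c` are not consecutive on the cycle.
  have hn1 : 1 < n := by omega
  rcases (by omega : k.val = 2 ∨ k.val + 2 = n ∨ (3 ≤ k.val ∧ k.val + 3 ≤ n)) with h | h | h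
  · refine hasInducedPath_three (b := ⟨3, by omega⟩) (c := ⟨n - 1, by omega⟩)
      ?_ ?_ ?_ ?_ ?_ ?_ ?_ ?_ ?_ <;>
    simp only [compl_cycleGraph_sup_edge_adj_iff hn1, ne_eq, Fin.ext_iff] <;> grind
  · refine hasInducedPath_three (b := ⟨n - 3, by omega⟩) (c := ⟨1, by omega⟩)
      ?_ ?_ ?_ ?_ ?_ ?_ ?_ ?_ ?_ <;>
    simp only [compl_cycleGraph_sup_edge_adj_iff hn1, ne_eq, Fin.ext_iff] <;> grind
  · refine hasInducedPath_three (b := ⟨k.val + 1, by omega⟩) (c := ⟨1, by omega⟩)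
      ?_ ?_ ?_ ?_ ?_ ?_ ?_ ?_ ?_ <;>
    simp only [compl_cycleGraph_sup_edge_adj_iff hn1, ne_eq, Fin.ext_iff] <;> grind

theorem exists_hasInducedPath_compl_cycleGraph_sup_edge {n : ℕ} [NeZero n] (hn : 5 ≤ n)
    {i j : Fin n} (hij : i ≠ j) (h : ¬(cycleGraph n).Adj i j) :
    ∃ ℓ ≠ 2, HasInducedPath (cycleGraph n ⊔ edge i j)ᶜ i j ℓ := by
  let r := cycleGraphAddRight i
  have hr0 : r 0 = i := zero_add i
  have hrk : r (j - i) = j := sub_add_cancel j i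
  obtain ⟨ℓ, hℓ, hp⟩ := exists_hasInducedPath_compl_cycleGraph_sup_edge_zero hn
    (sub_ne_zero.2 hij.symm) (by rwa [← r.map_adj_iff, hr0, hrk])
  have hp' : HasInducedPath (cycleGraph n ⊔ edge (r 0) (r (j - i)))ᶜ (r 0) (r (j - i)) ℓ :=
    hp.map (Embedding.complEquiv (r.toEmbedding.supEdge 0 (j - i)))
  rw [hr0, hrk] at hp'
  exact ⟨ℓ, hℓ, hp'⟩

/-- If `{u,v}` is a two-pair of `G` (every induced `u`–`v` path has length
exactly 2) and the complement of `G` has no induced cycle of length 5 or more,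
then the complement of `G + uv` has no induced cycle of length 5 or more. -/
theorem compl_add_edge_no_long_cycle {V : Type*} (G : SimpleGraph V) (u v : V)
    (hne : u ≠ v) (huv : ¬ G.Adj u v)
    (htp : ∀ ℓ, HasInducedPath G u v ℓ → ℓ = 2)
    (hc : ∀ n, 5 ≤ n → ¬ HasInducedCycle Gᶜ n) :
    ∀ n, 5 ≤ n → ¬ HasInducedCycle (G ⊔ SimpleGraph.edge u v)ᶜ n := by
  rintro n hn ⟨c⟩
  have : NeZero n := ⟨by omega⟩
  rw [← compl_sup_edge_sup_edge hne huv] at hc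
  obtain ⟨i, hi⟩ : u ∈ Set.range c :=
    Classical.byContradiction fun hu => hc n hn ⟨c.toSupEdge hu v⟩
  obtain ⟨j, hj⟩ : v ∈ Set.range c :=
    Classical.byContradiction fun hv => hc n hn ⟨edge_comm v u ▸ c.toSupEdge hv u⟩
  have hnadj : ¬(cycleGraph n).Adj i j := fun h => by
    simpa [hi, hj, edge_adj, hne] using c.map_adj_iff.2 h
  obtain ⟨ℓ, hℓ, hp⟩ := exists_hasInducedPath_compl_cycleGraph_sup_edge hn
    (fun h => hne (hi.symm.trans ((congrArg c h).trans hj))) hnadj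
  have hp' : HasInducedPath G (c i) (c j) ℓ := hp.map (c.complSupEdge huv hi hj)
  rw [hi, hj] at hp'
  exact hℓ (htp ℓ hp')
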